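/- Let C be a unital C*-algebra, (x_n) a sequence of self-adjoint invertible elements of C, and x ∈ C invertible with x_n → x in norm. Then x is self-adjoint and invertible, and 1_{≥0}(x_n) → 1_{≥0}(x) in norm. -/

import Mathlib

/-- The spectral projection `1_{≥0}(x)` of a self-adjoint element onto `[0, ∞)`,
obtained by applying the indicator function of `[0, ∞)` via the continuous
functional calculus. -/
noncomputable def posSpectralProj {C : Type*} [CStarAlgebra C] (x : C) : C :=
  cfc (fun t : ℝ => if 0 ≤ t then (1 : ℝ) else 0) x

/-!
The indicator of `[0, ∞)` is continuous on the open set `{0}ᶜ`, which is a neighbourhood of the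
spectrum of every invertible self-adjoint element. Since the continuous functional calculus is
continuous in the element for functions continuous on a common neighbourhood of the spectra,
`posSpectralProj` is continuous on the invertible self-adjoint elements.
-/

open Filter Topology

lemma continuousOn_indicator_nonneg :
    ContinuousOn (fun t : ℝ => if 0 ≤ t then (1 : ℝ) else 0) {0}ᶜ := by
  intro t ht
  rcases lt_or_gt_of_ne ht with hneg | hpos
  · refine ((continuousAt_const (y := (0 : ℝ))).congr ?_).continuousWithinAt
    filter_upwards [gt_mem_nhds hneg] with s hs
    simp [not_le.mpr hs]
  · refine ((continuousAt_const (y := (1 : ℝ))).congr ?_).continuousWithinAt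
    filter_upwards [lt_mem_nhds hpos] with s hs
    simp [hs.le]

lemma continuousOn_posSpectralProj {C : Type*} [CStarAlgebra C] :
    ContinuousOn posSpectralProj {a : C | IsSelfAdjoint a ∧ IsUnit a} := by
  have hnhds : ({0}ᶜ : Set ℝ) ∈ 𝓝ˢ (⋃ a ∈ {a : C | IsSelfAdjoint a ∧ IsUnit a}, spectrum ℝ a) :=
    isOpen_compl_singleton.mem_nhdsSet.mpr <| Set.iUnion₂_subset fun a ha t ht (h0 : t = 0) =>
      (spectrum.zero_notMem_iff ℝ).mpr ha.2 (h0 ▸ ht)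
  exact continuousOn_id.cfc_of_mem_nhdsSet _ hnhds (fun a ha => ha.1)
    continuousOn_indicator_nonneg

lemma IsSelfAdjoint.of_tendsto {ι C : Type*} [TopologicalSpace C] [T2Space C] [Star C]
    [ContinuousStar C] {F : Filter ι} [F.NeBot] {x : ι → C} {l : C}
    (hsa : ∀ i, IsSelfAdjoint (x i)) (hconv : Tendsto x F (𝓝 l)) :
    IsSelfAdjoint l :=
  (isClosed_eq continuous_star continuous_id).mem_of_tendsto hconv (Eventually.of_forall hsa)

/-- If `(x n)` is a sequence of self-adjoint invertible elements of a unital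
C*-algebra converging in norm to an invertible element `x`, then `x` is self-adjoint and
invertible and `1_{≥0}(x n) → 1_{≥0}(x)` in norm. -/
theorem stmt1 {C : Type*} [CStarAlgebra C] (x : ℕ → C)
    (hsa : ∀ n, IsSelfAdjoint (x n)) (hu : ∀ n, IsUnit (x n))
    (l : C) (hl : IsUnit l)
    (hconv : Filter.Tendsto x Filter.atTop (nhds l)) :
    (IsSelfAdjoint l ∧ IsUnit l) ∧
      Filter.Tendsto (fun n => posSpectralProj (x n)) Filter.atTop
        (nhds (posSpectralProj l)) := by
  have hl' : IsSelfAdjoint l ∧ IsUnit l := ⟨IsSelfAdjoint.of_tendsto hsa hconv, hl⟩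
  refine ⟨hl', (continuousOn_posSpectralProj l hl').tendsto.comp ?_⟩
  exact tendsto_nhdsWithin_iff.mpr ⟨hconv, Eventually.of_forall fun n => ⟨hsa n, hu n⟩⟩
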